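/- For weights w_x = x^{-1}(ln x)^{β} with β > -1 (and w_0 = w_1 = 1), T(x) := Σ_{i=0}^{x-1} γ_i Σ_{j=0}^{i} π_j satisfies T(x) ~ x² ln x/(β+1) as x → ∞, where γ_x = 1/w_x and π_x = w_{x-1} + w_x. -/

import Mathlib

/-!
The product defining `γ` telescopes to `1 / w`, and the inner sum is `2 W(i+1) - w i` with
`W n = ∑_{i<n} w i`, so the summand of `T` is `2 W(i+1) / w i - 1`. Both `W` and `T` are evaluated
by Stolz–Cesàro against the increments `G (n+1) - G n` of an explicit antiderivative `G` of `g`: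
by the mean value theorem such an increment is `g c` for some `c ∈ [n, n+1]`, and `g c ~ g n`
because `g` varies slowly. With `G = (log x)^(β+1) / (β+1)` (increasing to `∞` as `β > -1`)
this gives `W n ~ (log n)^(β+1) / (β+1)`, so the summand is `~ 2 n log n / (β+1)`; with
`G = x² log x / (β+1)` it gives `T x ~ x² log x / (β+1)`.
-/

open Filter Asymptotics Finset Topology

theorem prod_Icc_div_eq_div {K : Type*} [Field K] {w : ℕ → K} (hw : ∀ n, w n ≠ 0) (x : ℕ) :
    ∏ i ∈ Icc 1 x, w (i - 1) / w i = w 0 / w x := by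
  induction x with
  | zero => simp [hw 0]
  | succ k ih =>
    rw [prod_Icc_succ_top (by omega), ih, Nat.add_sub_cancel]
    field_simp [hw k, hw (k + 1)]

theorem sum_range_succ_eq_two_mul_sum_sub {R : Type*} [CommRing R] {π w : ℕ → R}
    (h0 : π 0 = w 0) (h : ∀ x, 1 ≤ x → π x = w (x - 1) + w x) (i : ℕ) :
    ∑ j ∈ range (i + 1), π j = 2 * ∑ j ∈ range (i + 1), w j - w i := by
  induction i with
  | zero =>
    rw [sum_range_one, sum_range_one, h0]
    ring
  | succ k ih =>
    rw [sum_range_succ, ih, h (k + 1) (by omega), sum_range_succ w (k + 1), Nat.add_sub_cancel]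
    ring

theorem Asymptotics.IsEquivalent.sum_range_of_sub {f G : ℕ → ℝ}
    (h : f ~[atTop] fun n => G (n + 1) - G n) (hG : Monotone G)
    (htop : Tendsto G atTop atTop) :
    (fun n => ∑ i ∈ range n, f i) ~[atTop] G := by
  have hsum : ∀ n, ∑ i ∈ range n, (G (i + 1) - G i) = G n - G 0 := sum_range_sub G
  have hΔ : Tendsto (fun n => ∑ i ∈ range n, (G (i + 1) - G i)) atTop atTop :=
    (tendsto_atTop_add_const_right _ (-G 0) htop).congr fun n => by rw [hsum, sub_eq_add_neg]
  have hlo := h.isLittleO.sum_range (fun i => sub_nonneg.2 (hG i.le_succ)) hΔ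
  simp only [Pi.sub_apply, sum_sub_distrib, hsum] at hlo
  have hG0 : (fun _ => G 0) =o[atTop] G :=
    isLittleO_const_left.2 (Or.inr (tendsto_norm_atTop_atTop.comp htop))
  have : (fun n => ∑ i ∈ range n, f i) ~[atTop] fun n => G n - G 0 := hlo
  exact this.trans (IsEquivalent.refl.sub_isLittleO hG0)

theorem isEquivalent_sub_of_hasDerivAt {G g : ℝ → ℝ} (hG : ∀ᶠ x in atTop, HasDerivAt G (g x) x)
    (hg : ∀ c : ℕ → ℝ, (∀ n : ℕ, c n ∈ Set.Icc (n : ℝ) (n + 1)) →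
      (fun n => g (c n)) ~[atTop] fun n => g n) :
    (fun n : ℕ => G (n + 1) - G n) ~[atTop] fun n => g n := by
  obtain ⟨N, hN⟩ := eventually_atTop.1 hG
  have hmvt : ∀ n : ℕ, ∃ c ∈ Set.Icc (n : ℝ) (n + 1), N ≤ n → G (n + 1) - G n = g c := by
    intro n
    by_cases hn : N ≤ n
    · obtain ⟨c, hc, hslope⟩ := exists_hasDerivAt_eq_slope G g (lt_add_one (n : ℝ))
        (fun x hx => (hN x (hn.trans hx.1)).continuousAt.continuousWithinAt)
        (fun x hx => hN x (hn.trans hx.1.le))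
      exact ⟨c, Set.Ioo_subset_Icc_self hc, fun _ => by simpa using hslope.symm⟩
    · exact ⟨n, ⟨le_rfl, by linarith⟩, fun h => absurd h hn⟩
  choose c hc hcG using hmvt
  refine (hg c hc).congr_left ?_
  filter_upwards [eventually_ge_atTop ⌈N⌉₊] with n hn
  exact (hcG n (Nat.ceil_le.1 hn)).symm

theorem isEquivalent_natCast_of_mem_Icc {c : ℕ → ℝ} (hc : ∀ n : ℕ, c n ∈ Set.Icc (n : ℝ) (n + 1)) :
    c ~[atTop] fun n => (n : ℝ) := by
  refine IsLittleO.isEquivalent ?_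
  have hbdd : (c - fun n : ℕ => (n : ℝ)) =O[atTop] fun _ => (1 : ℝ) :=
    isBigO_of_le _ fun n => by
      rw [norm_one, Real.norm_eq_abs, abs_le]
      constructor <;> simp only [Pi.sub_apply] <;> linarith [(hc n).1, (hc n).2]
  exact hbdd.trans_isLittleO ((isLittleO_one_left_iff ℝ).2
    (tendsto_norm_atTop_atTop.comp tendsto_natCast_atTop_atTop))

theorem isEquivalent_log_of_mem_Icc {c : ℕ → ℝ} (hc : ∀ n : ℕ, c n ∈ Set.Icc (n : ℝ) (n + 1)) :
    (fun n => Real.log (c n)) ~[atTop] fun n => Real.log n :=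
  (isEquivalent_natCast_of_mem_Icc hc).log tendsto_natCast_atTop_atTop

theorem Real.monotone_log_natCast : Monotone fun n : ℕ => Real.log n := by
  intro a b hab
  rcases a.eq_zero_or_pos with rfl | ha
  · simpa using Real.log_natCast_nonneg b
  · exact Real.log_le_log (by exact_mod_cast ha) (by exact_mod_cast hab)

theorem hasDerivAt_log_rpow_div {β : ℝ} (hβ : β + 1 ≠ 0) {x : ℝ} (hx : 1 < x) :
    HasDerivAt (fun t => Real.log t ^ (β + 1) / (β + 1)) (x⁻¹ * Real.log x ^ β) x := by
  have h := ((Real.hasDerivAt_rpow_const (p := β + 1) (Or.inl (Real.log_pos hx).ne')).comp x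
    (Real.hasDerivAt_log (by linarith))).div_const (β + 1)
  refine h.congr_deriv ?_
  rw [add_sub_cancel_right]
  field_simp

theorem isEquivalent_sum_range_of_isEquivalent_inv_mul_log_rpow {β : ℝ} (hβ : -1 < β)
    {w : ℕ → ℝ} (hw : w ~[atTop] fun n : ℕ => (n : ℝ)⁻¹ * Real.log n ^ β) :
    (fun n => ∑ i ∈ range n, w i) ~[atTop] fun n : ℕ => Real.log n ^ (β + 1) / (β + 1) := by
  have hβ1 : 0 < β + 1 := by linarith
  have hΔ := isEquivalent_sub_of_hasDerivAt
    ((eventually_gt_atTop 1).mono fun x hx => hasDerivAt_log_rpow_div hβ1.ne' hx)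
    fun c hc => (isEquivalent_natCast_of_mem_Icc hc).inv.mul
      ((isEquivalent_log_of_mem_Icc hc).rpow fun n => Real.log_natCast_nonneg n)
  refine (hw.trans (hΔ.congr_left (.of_forall fun n => by push_cast; rfl)).symm).sum_range_of_sub
    (fun a b hab => ?_) ?_
  · exact div_le_div_of_nonneg_right (Real.rpow_le_rpow (Real.log_natCast_nonneg a)
      (Real.monotone_log_natCast hab) hβ1.le) hβ1.le
  · exact ((tendsto_rpow_atTop hβ1).comp
      (Real.tendsto_log_atTop.comp tendsto_natCast_atTop_atTop)).atTop_div_const hβ1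

theorem hasDerivAt_sq_mul_log_div (b : ℝ) {x : ℝ} (hx : x ≠ 0) :
    HasDerivAt (fun t => t ^ 2 * Real.log t / b) ((2 * x * Real.log x + x) / b) x := by
  have h := ((hasDerivAt_pow 2 x).mul (Real.hasDerivAt_log hx)).div_const b
  refine h.congr_deriv ?_
  field_simp
  ring

theorem isEquivalent_two_mul_mul_log_add_div (b : ℝ) :
    (fun t : ℝ => (2 * t * Real.log t + t) / b) ~[atTop] fun t => 2 * t * Real.log t / b := by
  have hlog : (fun _ : ℝ => (1 : ℝ)) =o[atTop] fun t => 2 * Real.log t :=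
    (isLittleO_one_left_iff ℝ).2
      (tendsto_norm_atTop_atTop.comp (Real.tendsto_log_atTop.const_mul_atTop two_pos))
  refine IsLittleO.isEquivalent
    (((isBigO_refl (fun t : ℝ => t / b) atTop).mul_isLittleO hlog).congr
      (fun t => ?_) fun t => ?_)
  · simp only [Pi.sub_apply]
    ring
  · ring

theorem isEquivalent_sum_range_of_isEquivalent_two_mul_mul_log {b : ℝ} (hb : 0 < b) {f : ℕ → ℝ}
    (hf : f ~[atTop] fun n : ℕ => 2 * n * Real.log n / b) :
    (fun n => ∑ i ∈ range n, f i) ~[atTop] fun n : ℕ => (n : ℝ) ^ 2 * Real.log n / b := by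
  have hE := isEquivalent_two_mul_mul_log_add_div b
  have hΔ := isEquivalent_sub_of_hasDerivAt
    ((eventually_gt_atTop 0).mono fun x hx => hasDerivAt_sq_mul_log_div b hx.ne')
    fun c hc => by
      have hc_top : Tendsto c atTop atTop :=
        tendsto_atTop_mono (fun n => (hc n).1) tendsto_natCast_atTop_atTop
      have hmain : (fun n => 2 * c n * Real.log (c n) / b) ~[atTop]
          fun n : ℕ => 2 * n * Real.log n / b :=
        ((IsEquivalent.refl.mul (isEquivalent_natCast_of_mem_Icc hc)).mul
          (isEquivalent_log_of_mem_Icc hc)).div IsEquivalent.refl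
      exact ((hE.comp_tendsto hc_top).trans hmain).trans
        (hE.comp_tendsto tendsto_natCast_atTop_atTop).symm
  refine (hf.trans ((hE.comp_tendsto tendsto_natCast_atTop_atTop).symm.trans hΔ.symm)).congr_right
    (.of_forall fun n => by push_cast; rfl) |>.sum_range_of_sub (fun m n hmn => ?_) ?_
  · have hmn' : (m : ℝ) ≤ n := by exact_mod_cast hmn
    have hlog_le := Real.monotone_log_natCast hmn
    have hlog_nonneg := Real.log_natCast_nonneg m
    gcongr
  · exact ((tendsto_pow_atTop two_ne_zero).comp tendsto_natCast_atTop_atTop).atTop_mul_atTop₀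
      (Real.tendsto_log_atTop.comp tendsto_natCast_atTop_atTop) |>.atTop_div_const hb

theorem isEquivalent_two_mul_sum_range_succ_div_sub_one {β : ℝ} (hβ : -1 < β) {w : ℕ → ℝ}
    (hw : w ~[atTop] fun n : ℕ => (n : ℝ)⁻¹ * Real.log n ^ β) :
    (fun n => 2 * (∑ i ∈ range (n + 1), w i) / w n - 1) ~[atTop]
      fun n : ℕ => 2 * n * Real.log n / (β + 1) := by
  have hβ1 : 0 < β + 1 := by linarith
  have hlog_succ : (fun n : ℕ => Real.log ((n + 1 : ℕ) : ℝ)) ~[atTop] fun n => Real.log n :=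
    isEquivalent_log_of_mem_Icc fun n => by push_cast; exact ⟨by linarith, le_rfl⟩
  have hW : (fun n => ∑ i ∈ range (n + 1), w i) ~[atTop]
      fun n : ℕ => Real.log n ^ (β + 1) / (β + 1) :=
    ((isEquivalent_sum_range_of_isEquivalent_inv_mul_log_rpow hβ hw).comp_tendsto
      (tendsto_add_atTop_nat 1)).trans
      ((hlog_succ.rpow fun n => Real.log_natCast_nonneg n).div IsEquivalent.refl)
  have hratio : (fun n => 2 * (∑ i ∈ range (n + 1), w i) / w n) ~[atTop]
      fun n : ℕ => 2 * n * Real.log n / (β + 1) := by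
    refine ((IsEquivalent.refl.mul hW).div hw).congr_right ?_
    filter_upwards [eventually_ge_atTop 2] with n hn
    have hlog : 0 < Real.log n := Real.log_pos (by exact_mod_cast hn)
    have hn0 : (0 : ℝ) < n := by positivity
    simp only [Pi.div_apply, Pi.mul_apply, Real.rpow_add_one hlog.ne']
    field_simp
  have htop : Tendsto (fun n : ℕ => 2 * n * Real.log n / (β + 1)) atTop atTop :=
    ((tendsto_natCast_atTop_atTop.const_mul_atTop two_pos).atTop_mul_atTop₀
      (Real.tendsto_log_atTop.comp tendsto_natCast_atTop_atTop)).atTop_div_const hβ1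
  exact hratio.sub_isLittleO (isLittleO_const_left.2 (Or.inr (tendsto_norm_atTop_atTop.comp htop)))

theorem stmt17 (β : ℝ) (hβ : -1 < β) (w γ π T : ℕ → ℝ)
    (hw0 : w 0 = 1) (hw1 : w 1 = 1)
    (hw : ∀ x, 2 ≤ x → w x = (x : ℝ)⁻¹ * (Real.log x) ^ β)
    (hγ0 : γ 0 = 1)
    (hγ : ∀ x, 1 ≤ x → γ x = ∏ i ∈ Finset.Icc 1 x, w (i - 1) / w i)
    (hπ0 : π 0 = w 0)
    (hπ : ∀ x, 1 ≤ x → π x = w (x - 1) + w x)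
    (hT : ∀ x, T x = ∑ i ∈ Finset.range x, γ i * ∑ j ∈ Finset.range (i + 1), π j) :
    Filter.Tendsto (fun x : ℕ =>
        T x / ((x : ℝ) ^ 2 * Real.log x / (β + 1)))
      Filter.atTop (nhds 1) := by
  have hwpos : ∀ n, 0 < w n := by
    intro n
    rcases lt_or_ge n 2 with hn | hn
    · interval_cases n <;> simp [hw0, hw1]
    · have : 0 < Real.log n := Real.log_pos (by exact_mod_cast hn)
      rw [hw n hn]
      positivity
  have hγw : ∀ n, γ n = (w n)⁻¹ := by
    intro n
    rcases n.eq_zero_or_pos with rfl | hn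
    · simp [hγ0, hw0]
    · rw [hγ n hn, prod_Icc_div_eq_div (fun i => (hwpos i).ne'), hw0, one_div]
  have hwequiv : w ~[atTop] fun n : ℕ => (n : ℝ)⁻¹ * Real.log n ^ β :=
    IsEquivalent.refl.congr_left ((eventually_ge_atTop 2).mono fun n hn => (hw n hn).symm)
  have hsummand : (fun i => γ i * ∑ j ∈ range (i + 1), π j) ~[atTop]
      fun n : ℕ => 2 * n * Real.log n / (β + 1) :=
    (isEquivalent_two_mul_sum_range_succ_div_sub_one hβ hwequiv).congr_left (.of_forall fun n => by
      dsimp only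
      rw [hγw, sum_range_succ_eq_two_mul_sum_sub hπ0 hπ]
      field_simp [(hwpos n).ne'])
  have hTequiv : T ~[atTop] fun n : ℕ => (n : ℝ) ^ 2 * Real.log n / (β + 1) := by
    simpa only [← hT] using
      isEquivalent_sum_range_of_isEquivalent_two_mul_mul_log (by linarith) hsummand
  refine (isEquivalent_iff_tendsto_one ?_).1 hTequiv
  filter_upwards [eventually_ge_atTop 2] with n hn
  have : 0 < Real.log n := Real.log_pos (by exact_mod_cast hn)
  have : β + 1 ≠ 0 := by linarith
  positivity
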